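/- (Lipschitz bound in belief.) Assume either 0 < p00 − p10 < 1/2 or 0 < p10 − p00 < 1, and set κ = 1/(1 − β|p00 − p10|). Then the functions π ↦ L0V_w(π,1), π ↦ L1V_w(π,1) and π ↦ V_w(π,1) are Lipschitz on [0,1] with constant κ(ρ1 − ρ0): for all π, π' ∈ [0,1], |V_w(π,1) − V_w(π',1)| ≤ κ(ρ1 − ρ0)|π − π'|, and likewise for L0V_w(·,1) and L1V_w(·,1). -/

import Mathlib

open Set

noncomputable section

/-- Expected immediate reward (success probability) at belief `π`. -/
def rhoB (ρ0 ρ1 π : ℝ) : ℝ := π * ρ0 + (1 - π) * ρ1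

/-- Belief update after a play resulting in success. -/
def Gam1 (p00 p10 ρ0 ρ1 π : ℝ) : ℝ :=
  (π * ρ0 * p00 + (1 - π) * ρ1 * p10) / (π * ρ0 + (1 - π) * ρ1)

/-- Belief update after a play resulting in failure. -/
def Gam0 (p00 p10 ρ0 ρ1 π : ℝ) : ℝ :=
  (π * (1 - ρ0) * p00 + (1 - π) * (1 - ρ1) * p10) /
    (π * (1 - ρ0) + (1 - π) * (1 - ρ1))

/-- Belief update without observation (natural Markov evolution). -/
def gam (p00 p10 π : ℝ) : ℝ := π * p00 + (1 - π) * p10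

/-- Action value of playing an available arm. -/
def Lact1 (p00 p10 ρ0 ρ1 β θ11 : ℝ) (V : ℝ → Bool → ℝ) (π : ℝ) : ℝ :=
  rhoB ρ0 ρ1 π
    + β * rhoB ρ0 ρ1 π *
        (θ11 * V (Gam1 p00 p10 ρ0 ρ1 π) true +
          (1 - θ11) * V (Gam1 p00 p10 ρ0 ρ1 π) false)
    + β * (1 - rhoB ρ0 ρ1 π) *
        (θ11 * V (Gam0 p00 p10 ρ0 ρ1 π) true +
          (1 - θ11) * V (Gam0 p00 p10 ρ0 ρ1 π) false)

/-- Action value of not playing an available arm (subsidy `w`). -/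
def Lact0a (p00 p10 β w θ01 : ℝ) (V : ℝ → Bool → ℝ) (π : ℝ) : ℝ :=
  w + β * (θ01 * V (gam p00 p10 π) true + (1 - θ01) * V (gam p00 p10 π) false)

/-- Action value for an unavailable arm (subsidy `w`). -/
def Lact0u (p00 p10 β w θ00 : ℝ) (V : ℝ → Bool → ℝ) (π : ℝ) : ℝ :=
  w + β * (θ00 * V (gam p00 p10 π) true + (1 - θ00) * V (gam p00 p10 π) false)

/-- Bellman operator of the constrained restless single-armed bandit with
stochastic availability; availability `y` is encoded by `Bool`. -/
def TwOp (p00 p10 ρ0 ρ1 β w θ11 θ01 θ00 : ℝ) (V : ℝ → Bool → ℝ) : ℝ → Bool → ℝ :=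
  fun π y =>
    if y then max (Lact1 p00 p10 ρ0 ρ1 β θ11 V π) (Lact0a p00 p10 β w θ01 V π)
    else Lact0u p00 p10 β w θ00 V π

/-- Bounded on the belief space `[0,1] × {0,1}`. -/
def BddOnIcc (V : ℝ → Bool → ℝ) : Prop :=
  ∃ C : ℝ, ∀ π ∈ Icc (0:ℝ) 1, ∀ y : Bool, |V π y| ≤ C

/-- Fixed point of an operator on the belief space `[0,1] × {0,1}`. -/
def FixedOnIcc (T : (ℝ → Bool → ℝ) → ℝ → Bool → ℝ) (V : ℝ → Bool → ℝ) : Prop :=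
  ∀ π ∈ Icc (0:ℝ) 1, ∀ y : Bool, T V π y = V π y

open Filter Topology
open scoped NNReal

/-!
The Bellman operator maps functions whose availability slices are `K`-Lipschitz in the belief,
`K = (ρ1 - ρ0) / (1 - β |p00 - p10|)`, to functions of the same kind. The passive branch
evaluates the continuation at `γ π`, and `γ` contracts beliefs by `|p00 - p10|`. The active branch
is the immediate reward, `(ρ1 - ρ0)`-Lipschitz, plus `β` times the continuation averaged over the
Bayesian posterior; since `Γ1`, `Γ0` are `γ` after the posteriors, this average is
`K |p00 - p10|`-Lipschitz, because averaging over the posterior never increases a Lipschitz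
constant: the posteriors `x ≤ z` are increasing in `π`, split `π = ρ(π) x + (1 - ρ(π)) z`, and
`ρ(π)` decreases, so all error terms add up to exactly `π' - π`. The choice of `K` solves
`K = (ρ1 - ρ0) + β |p00 - p10| K`. Value iteration from `0` converges to `V_w` uniformly on
`[0,1]`, and Lipschitz bounds pass to pointwise limits.
-/

lemma abs_convex_comb_le {θ a b m : ℝ} (hθ : θ ∈ Icc (0:ℝ) 1) (ha : |a| ≤ m) (hb : |b| ≤ m) :
    |θ * a + (1 - θ) * b| ≤ m :=
  abs_le.2 <| convex_Icc (-m) m (abs_le.1 ha) (abs_le.1 hb) hθ.1 (sub_nonneg.2 hθ.2)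
    (add_sub_cancel θ 1)

section Lipschitz

variable {α : Type*} [PseudoMetricSpace α] {s : Set α} {K : ℝ≥0}

lemma LipschitzOnWith.convex_comb {f g : α → ℝ} (hf : LipschitzOnWith K f s)
    (hg : LipschitzOnWith K g s) {θ : ℝ} (hθ : θ ∈ Icc (0:ℝ) 1) :
    LipschitzOnWith K (fun x => θ * f x + (1 - θ) * g x) s :=
  LipschitzOnWith.of_dist_le_mul fun x hx y hy => by
    have hfxy := hf.dist_le_mul x hx y hy
    have hgxy := hg.dist_le_mul x hx y hy
    rw [Real.dist_eq] at hfxy hgxy ⊢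
    rw [show θ * f x + (1 - θ) * g x - (θ * f y + (1 - θ) * g y)
      = θ * (f x - f y) + (1 - θ) * (g x - g y) by ring]
    exact abs_convex_comb_le hθ hfxy hgxy

lemma LipschitzOnWith.of_tendsto {β ι : Type*} [PseudoMetricSpace β] {l : Filter ι} [l.NeBot]
    {F : ι → α → β} {f : α → β} (hF : ∀ n, LipschitzOnWith K (F n) s)
    (hlim : ∀ x ∈ s, Tendsto (fun n => F n x) l (𝓝 (f x))) :
    LipschitzOnWith K f s :=
  LipschitzOnWith.of_dist_le_mul fun x hx y hy =>
    le_of_tendsto' ((hlim x hx).dist (hlim y hy)) fun n => (hF n).dist_le_mul x hx y hy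

lemma abs_mix_sub_mix_le {G : ℝ → ℝ} {s : Set ℝ} (hG : LipschitzOnWith K G s)
    {r r' x x' z z' : ℝ} (hx : x ∈ s) (hx' : x' ∈ s) (hz : z ∈ s) (hz' : z' ∈ s)
    (hr' : r' ∈ Icc (0:ℝ) 1) (hrr : r' ≤ r) (hxx : x ≤ x') (hzz : z ≤ z') (hxz : x ≤ z) :
    |(r * G x + (1 - r) * G z) - (r' * G x' + (1 - r') * G z')|
      ≤ K * ((r' * x' + (1 - r') * z') - (r * x + (1 - r) * z)) := by
  have hGx := hG.dist_le_mul x hx x' hx'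
  have hGz := hG.dist_le_mul z hz z' hz'
  have hGxz := hG.dist_le_mul x hx z hz
  rw [Real.dist_eq, Real.dist_eq, abs_sub_comm x, abs_of_nonneg (sub_nonneg.2 hxx)] at hGx
  rw [Real.dist_eq, Real.dist_eq, abs_sub_comm z, abs_of_nonneg (sub_nonneg.2 hzz)] at hGz
  rw [Real.dist_eq, Real.dist_eq, abs_sub_comm x, abs_of_nonneg (sub_nonneg.2 hxz)] at hGxz
  have h1r' : 0 ≤ 1 - r' := sub_nonneg.2 hr'.2
  have hrr' : 0 ≤ r - r' := sub_nonneg.2 hrr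
  calc |(r * G x + (1 - r) * G z) - (r' * G x' + (1 - r') * G z')|
      = |r' * (G x - G x') + (1 - r') * (G z - G z') + (r - r') * (G x - G z)| := by ring_nf
    _ ≤ r' * |G x - G x'| + (1 - r') * |G z - G z'| + (r - r') * |G x - G z| := by
      refine (abs_add_three _ _ _).trans_eq ?_
      rw [abs_mul, abs_mul, abs_mul, abs_of_nonneg hr'.1, abs_of_nonneg h1r',
        abs_of_nonneg hrr']
    _ ≤ r' * (K * (x' - x)) + (1 - r') * (K * (z' - z)) + (r - r') * (K * (z - x)) := by
      gcongr; exact hr'.1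
    _ = K * ((r' * x' + (1 - r') * z') - (r * x + (1 - r) * z)) := by ring

end Lipschitz

section Beliefs

lemma mapsTo_gam {p00 p10 : ℝ} (hp00 : p00 ∈ Icc (0:ℝ) 1) (hp10 : p10 ∈ Icc (0:ℝ) 1) :
    MapsTo (gam p00 p10) (Icc 0 1) (Icc 0 1) := fun π hπ =>
  convex_Icc (0:ℝ) 1 hp00 hp10 hπ.1 (sub_nonneg.2 hπ.2) (add_sub_cancel π 1)

lemma lipschitzWith_gam (p00 p10 : ℝ) : LipschitzWith ‖p00 - p10‖₊ (gam p00 p10) :=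
  LipschitzWith.of_dist_le_mul fun π π' => by
    rw [Real.dist_eq, Real.dist_eq, coe_nnnorm, Real.norm_eq_abs, ← abs_mul]
    exact le_of_eq (congrArg abs (by unfold gam; ring))

variable {ρ0 ρ1 π π' : ℝ}

lemma rhoB_mem_Icc (hρ0 : ρ0 ∈ Icc (0:ℝ) 1) (hρ1 : ρ1 ∈ Icc (0:ℝ) 1) (hπ : π ∈ Icc (0:ℝ) 1) :
    rhoB ρ0 ρ1 π ∈ Icc 0 1 :=
  convex_Icc (0:ℝ) 1 hρ0 hρ1 hπ.1 (sub_nonneg.2 hπ.2) (add_sub_cancel π 1)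

lemma rhoB_le_rhoB (hρ01 : ρ0 ≤ ρ1) (hππ' : π ≤ π') : rhoB ρ0 ρ1 π' ≤ rhoB ρ0 ρ1 π := by
  unfold rhoB; nlinarith

lemma abs_rhoB_sub_rhoB (hρ01 : ρ0 ≤ ρ1) (π π' : ℝ) :
    |rhoB ρ0 ρ1 π - rhoB ρ0 ρ1 π'| = (ρ1 - ρ0) * |π - π'| := by
  rw [← abs_of_nonneg (sub_nonneg.2 hρ01), ← abs_mul, abs_sub_comm]
  exact congrArg abs (by unfold rhoB; ring)

/-- Posterior probability of state `0`, from prior `π`, after an observation of likelihood `a`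
in state `0` and `b` in state `1`; thus `Γ1 = γ ∘ bayes ρ0 ρ1` and
`Γ0 = γ ∘ bayes (1 - ρ0) (1 - ρ1)`. -/
def bayes (a b π : ℝ) : ℝ := π * a / (π * a + (1 - π) * b)

variable {a b a' b' : ℝ}

lemma bayes_denom_pos (ha : 0 < a) (hb : 0 < b) (hπ : π ∈ Icc (0:ℝ) 1) :
    0 < π * a + (1 - π) * b := by
  obtain ⟨h0, h1⟩ := hπ
  nlinarith [mul_nonneg h0 (sub_nonneg.2 (min_le_left a b)),
    mul_nonneg (sub_nonneg.2 h1) (sub_nonneg.2 (min_le_right a b)), lt_min ha hb]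

lemma bayes_mem_Icc (ha : 0 < a) (hb : 0 < b) (hπ : π ∈ Icc (0:ℝ) 1) :
    bayes a b π ∈ Icc 0 1 := by
  have hd := bayes_denom_pos ha hb hπ
  refine ⟨div_nonneg (mul_nonneg hπ.1 ha.le) hd.le, (div_le_one hd).2 ?_⟩
  nlinarith [hπ.2]

lemma bayes_monotoneOn (ha : 0 < a) (hb : 0 < b) : MonotoneOn (bayes a b) (Icc 0 1) :=
  fun π hπ π' hπ' hππ' => by
    unfold bayes
    rw [div_le_div_iff₀ (bayes_denom_pos ha hb hπ) (bayes_denom_pos ha hb hπ')]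
    nlinarith [mul_pos ha hb]

lemma bayes_le_bayes (ha : 0 < a) (hb : 0 < b) (ha' : 0 < a') (hb' : 0 < b')
    (h : a * b' ≤ a' * b) (hπ : π ∈ Icc (0:ℝ) 1) : bayes a b π ≤ bayes a' b' π := by
  unfold bayes
  rw [div_le_div_iff₀ (bayes_denom_pos ha hb hπ) (bayes_denom_pos ha' hb' hπ)]
  nlinarith [mul_le_mul_of_nonneg_left h (mul_nonneg hπ.1 (sub_nonneg.2 hπ.2))]

lemma gam_bayes (p00 p10 : ℝ) (hd : π * a + (1 - π) * b ≠ 0) :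
    gam p00 p10 (bayes a b π) = (π * a * p00 + (1 - π) * b * p10) / (π * a + (1 - π) * b) := by
  unfold gam bayes
  field_simp
  ring

lemma rhoB_mul_bayes_add (hρ0 : 0 < ρ0) (hρ01 : ρ0 ≤ ρ1) (hρ1 : ρ1 < 1) (hπ : π ∈ Icc (0:ℝ) 1) :
    rhoB ρ0 ρ1 π * bayes ρ0 ρ1 π + (1 - rhoB ρ0 ρ1 π) * bayes (1 - ρ0) (1 - ρ1) π = π := by
  have hR := bayes_denom_pos hρ0 (hρ0.trans_le hρ01) hπ
  have hS := bayes_denom_pos (a := 1 - ρ0) (b := 1 - ρ1) (by linarith) (by linarith) hπ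
  rw [show 1 - rhoB ρ0 ρ1 π = π * (1 - ρ0) + (1 - π) * (1 - ρ1) by unfold rhoB; ring]
  unfold rhoB bayes
  rw [mul_div_cancel₀ _ hR.ne', mul_div_cancel₀ _ hS.ne']
  ring

def bayesMix (ρ0 ρ1 : ℝ) (G : ℝ → ℝ) (π : ℝ) : ℝ :=
  rhoB ρ0 ρ1 π * G (bayes ρ0 ρ1 π) + (1 - rhoB ρ0 ρ1 π) * G (bayes (1 - ρ0) (1 - ρ1) π)

lemma lipschitzOnWith_bayesMix {G : ℝ → ℝ} {K : ℝ≥0} (hG : LipschitzOnWith K G (Icc 0 1))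
    (hρ0 : 0 < ρ0) (hρ01 : ρ0 ≤ ρ1) (hρ1 : ρ1 < 1) :
    LipschitzOnWith K (bayesMix ρ0 ρ1 G) (Icc 0 1) := by
  have hρ1' : 0 < ρ1 := hρ0.trans_le hρ01
  have hρ0' : 0 < 1 - ρ0 := by linarith
  have hρ1'' : 0 < 1 - ρ1 := by linarith
  have hle : ∀ π ∈ Icc (0:ℝ) 1, ∀ π' ∈ Icc (0:ℝ) 1, π ≤ π' →
      |bayesMix ρ0 ρ1 G π - bayesMix ρ0 ρ1 G π'| ≤ K * (π' - π) := by
    intro π hπ π' hπ' hππ'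
    have h := abs_mix_sub_mix_le hG (bayes_mem_Icc hρ0 hρ1' hπ) (bayes_mem_Icc hρ0 hρ1' hπ')
      (bayes_mem_Icc hρ0' hρ1'' hπ) (bayes_mem_Icc hρ0' hρ1'' hπ')
      (rhoB_mem_Icc ⟨hρ0.le, by linarith⟩ ⟨hρ1'.le, hρ1.le⟩ hπ') (rhoB_le_rhoB hρ01 hππ')
      (bayes_monotoneOn hρ0 hρ1' hπ hπ' hππ') (bayes_monotoneOn hρ0' hρ1'' hπ hπ' hππ')
      (bayes_le_bayes hρ0 hρ1' hρ0' hρ1'' (by nlinarith) hπ)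
    rwa [rhoB_mul_bayes_add hρ0 hρ01 hρ1 hπ, rhoB_mul_bayes_add hρ0 hρ01 hρ1 hπ'] at h
  refine LipschitzOnWith.of_dist_le_mul fun π hπ π' hπ' => ?_
  rw [Real.dist_eq, Real.dist_eq]
  rcases le_total π π' with hππ' | hπ'π
  · rw [abs_sub_comm π, abs_of_nonneg (sub_nonneg.2 hππ')]
    exact hle π hπ π' hπ' hππ'
  · rw [abs_sub_comm, abs_of_nonneg (sub_nonneg.2 hπ'π)]
    exact hle π' hπ' π hπ hπ'π

lemma abs_bayesMix_sub_le {G G' : ℝ → ℝ} {π m : ℝ} (hρ0 : 0 < ρ0) (hρ01 : ρ0 ≤ ρ1)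
    (hρ1 : ρ1 < 1) (hπ : π ∈ Icc (0:ℝ) 1) (hm : ∀ x ∈ Icc (0:ℝ) 1, |G x - G' x| ≤ m) :
    |bayesMix ρ0 ρ1 G π - bayesMix ρ0 ρ1 G' π| ≤ m := by
  rw [show bayesMix ρ0 ρ1 G π - bayesMix ρ0 ρ1 G' π
    = rhoB ρ0 ρ1 π * (G (bayes ρ0 ρ1 π) - G' (bayes ρ0 ρ1 π))
      + (1 - rhoB ρ0 ρ1 π) * (G (bayes (1 - ρ0) (1 - ρ1) π) - G' (bayes (1 - ρ0) (1 - ρ1) π))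
    by unfold bayesMix; ring]
  exact abs_convex_comb_le (rhoB_mem_Icc ⟨hρ0.le, by linarith⟩ ⟨by linarith, hρ1.le⟩ hπ)
    (hm _ (bayes_mem_Icc hρ0 (by linarith) hπ))
    (hm _ (bayes_mem_Icc (by linarith) (by linarith) hπ))

end Beliefs

section Bellman

variable {p00 p10 ρ0 ρ1 β w θ : ℝ} {U U' : ℝ → Bool → ℝ} {K : ℝ≥0}

def availMix (θ : ℝ) (U : ℝ → Bool → ℝ) (x : ℝ) : ℝ := θ * U x true + (1 - θ) * U x false

lemma lipschitzOnWith_availMix {s : Set ℝ} (hU : ∀ y, LipschitzOnWith K (fun x => U x y) s)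
    (hθ : θ ∈ Icc (0:ℝ) 1) : LipschitzOnWith K (availMix θ U) s :=
  (hU true).convex_comb (hU false) hθ

lemma abs_availMix_sub_le {x m : ℝ} (hθ : θ ∈ Icc (0:ℝ) 1) (hm : ∀ y, |U x y - U' x y| ≤ m) :
    |availMix θ U x - availMix θ U' x| ≤ m := by
  rw [show availMix θ U x - availMix θ U' x
    = θ * (U x true - U' x true) + (1 - θ) * (U x false - U' x false) by unfold availMix; ring]
  exact abs_convex_comb_le hθ (hm true) (hm false)

lemma Lact0a_eq (π : ℝ) : Lact0a p00 p10 β w θ U π = w + β * availMix θ U (gam p00 p10 π) := rfl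

lemma Lact1_eq (hρ0 : 0 < ρ0) (hρ01 : ρ0 ≤ ρ1) (hρ1 : ρ1 < 1) {π : ℝ} (hπ : π ∈ Icc (0:ℝ) 1) :
    Lact1 p00 p10 ρ0 ρ1 β θ U π
      = rhoB ρ0 ρ1 π + β * bayesMix ρ0 ρ1 (fun x => availMix θ U (gam p00 p10 x)) π := by
  have hΓ1 : Gam1 p00 p10 ρ0 ρ1 π = gam p00 p10 (bayes ρ0 ρ1 π) :=
    (gam_bayes p00 p10 (bayes_denom_pos hρ0 (by linarith) hπ).ne').symm
  have hΓ0 : Gam0 p00 p10 ρ0 ρ1 π = gam p00 p10 (bayes (1 - ρ0) (1 - ρ1) π) :=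
    (gam_bayes p00 p10 (bayes_denom_pos (a := 1 - ρ0) (b := 1 - ρ1)
      (by linarith) (by linarith) hπ).ne').symm
  unfold Lact1 bayesMix availMix
  rw [hΓ1, hΓ0]
  ring

lemma lipschitzOnWith_availMix_gam (hp00 : p00 ∈ Icc (0:ℝ) 1) (hp10 : p10 ∈ Icc (0:ℝ) 1)
    (hθ : θ ∈ Icc (0:ℝ) 1) (hU : ∀ y, LipschitzOnWith K (fun x => U x y) (Icc 0 1)) :
    LipschitzOnWith (K * ‖p00 - p10‖₊) (fun x => availMix θ U (gam p00 p10 x)) (Icc 0 1) :=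
  (lipschitzOnWith_availMix hU hθ).comp (lipschitzWith_gam p00 p10).lipschitzOnWith
    (mapsTo_gam hp00 hp10)

lemma lipschitzOnWith_Lact0a (hp00 : p00 ∈ Icc (0:ℝ) 1) (hp10 : p10 ∈ Icc (0:ℝ) 1)
    (hβ : 0 ≤ β) (hK : β * |p00 - p10| * K ≤ K) (hθ : θ ∈ Icc (0:ℝ) 1)
    (hU : ∀ y, LipschitzOnWith K (fun x => U x y) (Icc 0 1)) :
    LipschitzOnWith K (Lact0a p00 p10 β w θ U) (Icc 0 1) :=
  LipschitzOnWith.of_dist_le_mul fun π hπ π' hπ' => by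
    have hQ := (lipschitzOnWith_availMix_gam hp00 hp10 hθ hU).dist_le_mul π hπ π' hπ'
    rw [Real.dist_eq, Real.dist_eq, NNReal.coe_mul, coe_nnnorm, Real.norm_eq_abs] at hQ
    rw [Real.dist_eq, Real.dist_eq, Lact0a_eq, Lact0a_eq, add_sub_add_left_eq_sub, ← mul_sub,
      abs_mul, abs_of_nonneg hβ]
    calc β * |availMix θ U (gam p00 p10 π) - availMix θ U (gam p00 p10 π')|
        ≤ β * (K * |p00 - p10| * |π - π'|) := by gcongr
      _ = β * |p00 - p10| * K * |π - π'| := by ring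
      _ ≤ K * |π - π'| := by gcongr

lemma lipschitzOnWith_Lact1 (hp00 : p00 ∈ Icc (0:ℝ) 1) (hp10 : p10 ∈ Icc (0:ℝ) 1)
    (hρ0 : 0 < ρ0) (hρ01 : ρ0 ≤ ρ1) (hρ1 : ρ1 < 1) (hβ : 0 ≤ β)
    (hK : ρ1 - ρ0 + β * |p00 - p10| * K ≤ K) (hθ : θ ∈ Icc (0:ℝ) 1)
    (hU : ∀ y, LipschitzOnWith K (fun x => U x y) (Icc 0 1)) :
    LipschitzOnWith K (Lact1 p00 p10 ρ0 ρ1 β θ U) (Icc 0 1) :=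
  LipschitzOnWith.of_dist_le_mul fun π hπ π' hπ' => by
    have hM := (lipschitzOnWith_bayesMix (lipschitzOnWith_availMix_gam hp00 hp10 hθ hU)
      hρ0 hρ01 hρ1).dist_le_mul π hπ π' hπ'
    rw [Real.dist_eq, Real.dist_eq, NNReal.coe_mul, coe_nnnorm, Real.norm_eq_abs] at hM
    rw [Real.dist_eq, Real.dist_eq, Lact1_eq hρ0 hρ01 hρ1 hπ, Lact1_eq hρ0 hρ01 hρ1 hπ',
      add_sub_add_comm, ← mul_sub]
    refine (abs_add_le _ _).trans ?_
    rw [abs_rhoB_sub_rhoB hρ01, abs_mul, abs_of_nonneg hβ]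
    calc (ρ1 - ρ0) * |π - π'| + β * |bayesMix ρ0 ρ1 (fun x => availMix θ U (gam p00 p10 x)) π
          - bayesMix ρ0 ρ1 (fun x => availMix θ U (gam p00 p10 x)) π'|
        ≤ (ρ1 - ρ0) * |π - π'| + β * (K * |p00 - p10| * |π - π'|) := by gcongr
      _ = (ρ1 - ρ0 + β * |p00 - p10| * K) * |π - π'| := by ring
      _ ≤ K * |π - π'| := by gcongr

lemma lipschitzOnWith_TwOp {θ11 θ01 θ00 : ℝ} (hp00 : p00 ∈ Icc (0:ℝ) 1)
    (hp10 : p10 ∈ Icc (0:ℝ) 1) (hρ0 : 0 < ρ0) (hρ01 : ρ0 ≤ ρ1) (hρ1 : ρ1 < 1) (hβ : 0 ≤ β)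
    (hK : ρ1 - ρ0 + β * |p00 - p10| * K ≤ K) (hθ11 : θ11 ∈ Icc (0:ℝ) 1)
    (hθ01 : θ01 ∈ Icc (0:ℝ) 1) (hθ00 : θ00 ∈ Icc (0:ℝ) 1)
    (hU : ∀ y, LipschitzOnWith K (fun x => U x y) (Icc 0 1)) :
    ∀ y, LipschitzOnWith K (fun x => TwOp p00 p10 ρ0 ρ1 β w θ11 θ01 θ00 U x y) (Icc 0 1) := by
  have hK0 : β * |p00 - p10| * K ≤ K := by linarith
  rintro (_ | _)
  · -- `Lact0u` has the same body as `Lact0a`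
    exact lipschitzOnWith_Lact0a hp00 hp10 hβ hK0 hθ00 hU
  · have h1 := lipschitzOnWith_Lact1 hp00 hp10 hρ0 hρ01 hρ1 hβ hK hθ11 hU
    have h0 := lipschitzOnWith_Lact0a (w := w) hp00 hp10 hβ hK0 hθ01 hU
    refine LipschitzOnWith.of_dist_le_mul fun π hπ π' hπ' => ?_
    exact (abs_max_sub_max_le_max _ _ _ _).trans
      (max_le (h1.dist_le_mul π hπ π' hπ') (h0.dist_le_mul π hπ π' hπ'))

lemma abs_TwOp_sub_le {θ11 θ01 θ00 m : ℝ} (hp00 : p00 ∈ Icc (0:ℝ) 1)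
    (hp10 : p10 ∈ Icc (0:ℝ) 1) (hρ0 : 0 < ρ0) (hρ01 : ρ0 ≤ ρ1) (hρ1 : ρ1 < 1) (hβ : 0 ≤ β)
    (hθ11 : θ11 ∈ Icc (0:ℝ) 1) (hθ01 : θ01 ∈ Icc (0:ℝ) 1) (hθ00 : θ00 ∈ Icc (0:ℝ) 1)
    (hm : ∀ x ∈ Icc (0:ℝ) 1, ∀ y, |U x y - U' x y| ≤ m) :
    ∀ π ∈ Icc (0:ℝ) 1, ∀ y, |TwOp p00 p10 ρ0 ρ1 β w θ11 θ01 θ00 U π y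
      - TwOp p00 p10 ρ0 ρ1 β w θ11 θ01 θ00 U' π y| ≤ β * m := by
  have hQ : ∀ θ ∈ Icc (0:ℝ) 1, ∀ x ∈ Icc (0:ℝ) 1,
      |availMix θ U (gam p00 p10 x) - availMix θ U' (gam p00 p10 x)| ≤ m :=
    fun θ hθ x hx => abs_availMix_sub_le hθ (hm _ (mapsTo_gam hp00 hp10 hx))
  have h0 : ∀ θ ∈ Icc (0:ℝ) 1, ∀ π ∈ Icc (0:ℝ) 1,
      |Lact0a p00 p10 β w θ U π - Lact0a p00 p10 β w θ U' π| ≤ β * m := fun θ hθ π hπ => by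
    rw [Lact0a_eq, Lact0a_eq, add_sub_add_left_eq_sub, ← mul_sub, abs_mul, abs_of_nonneg hβ]
    exact mul_le_mul_of_nonneg_left (hQ θ hθ π hπ) hβ
  intro π hπ y
  cases y
  · exact h0 θ00 hθ00 π hπ
  · refine (abs_max_sub_max_le_max _ _ _ _).trans (max_le ?_ (h0 θ01 hθ01 π hπ))
    rw [Lact1_eq hρ0 hρ01 hρ1 hπ, Lact1_eq hρ0 hρ01 hρ1 hπ, add_sub_add_left_eq_sub, ← mul_sub,
      abs_mul, abs_of_nonneg hβ]
    exact mul_le_mul_of_nonneg_left (abs_bayesMix_sub_le hρ0 hρ01 hρ1 hπ (hQ θ11 hθ11)) hβ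

end Bellman

lemma lipschitzOnWith_of_contracting_fixed {α ι : Type*} [PseudoMetricSpace α] {s : Set α}
    {K : ℝ≥0} {T : (α → ι → ℝ) → α → ι → ℝ} {β C : ℝ} (hβ0 : 0 ≤ β) (hβ1 : β < 1)
    (hT : ∀ U U' m, (∀ x ∈ s, ∀ y, |U x y - U' x y| ≤ m) →
      ∀ x ∈ s, ∀ y, |T U x y - T U' x y| ≤ β * m)
    (hTK : ∀ U, (∀ y, LipschitzOnWith K (fun x => U x y) s) →
      ∀ y, LipschitzOnWith K (fun x => T U x y) s)
    {V : α → ι → ℝ} (hV : ∀ x ∈ s, ∀ y, |V x y| ≤ C) (hfix : ∀ x ∈ s, ∀ y, T V x y = V x y) :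
    ∀ y, LipschitzOnWith K (fun x => V x y) s := by
  set F : ℕ → α → ι → ℝ := fun n => T^[n] 0
  have hF_succ (n : ℕ) : F (n + 1) = T (F n) := Function.iterate_succ_apply' T n 0
  have hF_lip (n : ℕ) : ∀ y, LipschitzOnWith K (fun x => F n x y) s := by
    induction n with
    | zero => exact fun y => (LipschitzWith.const' 0).lipschitzOnWith
    | succ n ih => rw [hF_succ]; exact hTK _ ih
  have hF_close (n : ℕ) : ∀ x ∈ s, ∀ y, |F n x y - V x y| ≤ β ^ n * C := by
    induction n with
    | zero => simpa [F] using hV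
    | succ n ih =>
      intro x hx y
      rw [hF_succ, ← hfix x hx y, pow_succ', mul_assoc]
      exact hT _ _ _ ih x hx y
  have hβC : Tendsto (fun n => β ^ n * C) atTop (𝓝 0) := by
    simpa using (tendsto_pow_atTop_nhds_zero_of_lt_one hβ0 hβ1).mul_const C
  intro y
  refine LipschitzOnWith.of_tendsto (l := atTop) (fun n => hF_lip n y) fun x hx => ?_
  exact tendsto_iff_dist_tendsto_zero.2 <| squeeze_zero (fun _ => dist_nonneg)
    (fun n => (Real.dist_eq _ _).trans_le (hF_close n x hx y)) hβC

theorem stmt7_general (p00 p10 ρ0 ρ1 β w θ11 θ01 θ00 : ℝ)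
    (hp00 : p00 ∈ Icc (0:ℝ) 1) (hp10 : p10 ∈ Icc (0:ℝ) 1)
    (hρ0 : 0 < ρ0) (hρ01 : ρ0 < ρ1) (hρ1 : ρ1 < 1)
    (hβ : β ∈ Ioo (0:ℝ) 1)
    (hθ11 : θ11 ∈ Icc (0:ℝ) 1) (hθ01 : θ01 ∈ Icc (0:ℝ) 1) (hθ00 : θ00 ∈ Icc (0:ℝ) 1)
    (V : ℝ → Bool → ℝ) (hVb : BddOnIcc V)
    (hVfix : FixedOnIcc (TwOp p00 p10 ρ0 ρ1 β w θ11 θ01 θ00) V) :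
    ∀ π ∈ Icc (0:ℝ) 1, ∀ π' ∈ Icc (0:ℝ) 1,
      |Lact0a p00 p10 β w θ01 V π - Lact0a p00 p10 β w θ01 V π'|
        ≤ (1 / (1 - β * |p00 - p10|)) * (ρ1 - ρ0) * |π - π'|
      ∧ |Lact1 p00 p10 ρ0 ρ1 β θ11 V π - Lact1 p00 p10 ρ0 ρ1 β θ11 V π'|
        ≤ (1 / (1 - β * |p00 - p10|)) * (ρ1 - ρ0) * |π - π'|
      ∧ |V π true - V π' true|
        ≤ (1 / (1 - β * |p00 - p10|)) * (ρ1 - ρ0) * |π - π'| := by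
  obtain ⟨C, hC⟩ := hVb
  set κ := 1 / (1 - β * |p00 - p10|) * (ρ1 - ρ0)
  have hdiff : |p00 - p10| ≤ 1 :=
    abs_sub_le_iff.2 ⟨by linarith [hp00.2, hp10.1], by linarith [hp00.1, hp10.2]⟩
  have hden : 0 < 1 - β * |p00 - p10| := by nlinarith [hβ.1, hβ.2, abs_nonneg (p00 - p10)]
  have hκ : 0 ≤ κ := mul_nonneg (one_div_nonneg.2 hden.le) (sub_nonneg.2 hρ01.le)
  have hK : ρ1 - ρ0 + β * |p00 - p10| * (κ.toNNReal : ℝ) = κ.toNNReal := by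
    have hκ_mul : κ * (1 - β * |p00 - p10|) = ρ1 - ρ0 := by
      simp only [κ]
      field_simp
    rw [Real.coe_toNNReal _ hκ]
    linarith
  have hV := lipschitzOnWith_of_contracting_fixed hβ.1.le hβ.2
    (fun _ _ _ => abs_TwOp_sub_le hp00 hp10 hρ0 hρ01.le hρ1 hβ.1.le hθ11 hθ01 hθ00)
    (fun _ => lipschitzOnWith_TwOp hp00 hp10 hρ0 hρ01.le hρ1 hβ.1.le hK.le hθ11 hθ01 hθ00) hC hVfix
  have hbound {f : ℝ → ℝ} (hf : LipschitzOnWith κ.toNNReal f (Icc 0 1)) :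
      ∀ π ∈ Icc (0:ℝ) 1, ∀ π' ∈ Icc (0:ℝ) 1, |f π - f π'| ≤ κ * |π - π'| := fun π hπ π' hπ' => by
    simpa only [Real.dist_eq, Real.coe_toNNReal _ hκ] using hf.dist_le_mul π hπ π' hπ'
  intro π hπ π' hπ'
  exact ⟨hbound (lipschitzOnWith_Lact0a hp00 hp10 hβ.1.le (by linarith) hθ01 hV) π hπ π' hπ',
    hbound (lipschitzOnWith_Lact1 hp00 hp10 hρ0 hρ01.le hρ1 hβ.1.le hK.le hθ11 hV) π hπ π' hπ',
    hbound (hV true) π hπ π' hπ'⟩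

/-- **Lipschitz bound in belief.** Under
`0 < p00 − p10 < 1/2` or `0 < p10 − p00 < 1`, with
`κ = 1/(1 − β|p00 − p10|)`, the maps `π ↦ L0 V_w(π,1)`, `π ↦ L1 V_w(π,1)`
and `π ↦ V_w(π,1)` are Lipschitz on `[0,1]` with constant `κ(ρ1 − ρ0)`. -/
theorem stmt7 (p00 p10 ρ0 ρ1 β w θ11 θ01 θ00 : ℝ)
    (hp00 : p00 ∈ Icc (0:ℝ) 1) (hp10 : p10 ∈ Icc (0:ℝ) 1)
    (hρ0 : 0 < ρ0) (hρ01 : ρ0 < ρ1) (hρ1 : ρ1 < 1)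
    (hβ : β ∈ Ioo (0:ℝ) 1)
    (hθ11 : θ11 ∈ Icc (0:ℝ) 1) (hθ01 : θ01 ∈ Icc (0:ℝ) 1) (hθ00 : θ00 ∈ Icc (0:ℝ) 1)
    (hp : (0 < p00 - p10 ∧ p00 - p10 < 1/2) ∨ (0 < p10 - p00 ∧ p10 - p00 < 1))
    (V : ℝ → Bool → ℝ) (hVb : BddOnIcc V)
    (hVfix : FixedOnIcc (TwOp p00 p10 ρ0 ρ1 β w θ11 θ01 θ00) V) :
    ∀ π ∈ Icc (0:ℝ) 1, ∀ π' ∈ Icc (0:ℝ) 1,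
      |Lact0a p00 p10 β w θ01 V π - Lact0a p00 p10 β w θ01 V π'|
        ≤ (1 / (1 - β * |p00 - p10|)) * (ρ1 - ρ0) * |π - π'|
      ∧ |Lact1 p00 p10 ρ0 ρ1 β θ11 V π - Lact1 p00 p10 ρ0 ρ1 β θ11 V π'|
        ≤ (1 / (1 - β * |p00 - p10|)) * (ρ1 - ρ0) * |π - π'|
      ∧ |V π true - V π' true|
        ≤ (1 / (1 - β * |p00 - p10|)) * (ρ1 - ρ0) * |π - π'| :=
  stmt7_general p00 p10 ρ0 ρ1 β w θ11 θ01 θ00 hp00 hp10 hρ0 hρ01 hρ1 hβ hθ11 hθ01 hθ00 V hVb hVfix
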